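/- Let C be a cartesian coherent differential category (with c& an isomorphism), and define the strengths φ⁰ := c&⁻¹ ∘ (id_{D X₀} & ι₀) ∈ C(D X₀ & X₁, D(X₀ & X₁)) and φ¹ := c&⁻¹ ∘ (ι₀ & id_{D X₁}) ∈ C(X₀ & D X₁, D(X₀ & X₁)), and the partial derivatives D₀ f := D f ∘ φ⁰ and D₁ f := D f ∘ φ¹ for f ∈ C(X₀ & X₁, Y). Then the Leibniz rule holds: D f ∘ c&⁻¹ = θ ∘ D₀ D₁ f = θ ∘ D₁ D₀ f. -/
import Mathlib


open CategoryTheory CategoryTheory.Limits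
open scoped Classical

universe v u

/-- A summable pairing structure on a category `C` whose hom-sets carry a
distinguished morphism `0` satisfying `0 ∘ f = 0`. -/
structure SummablePairing (C : Type u) [Category.{v} C] where
  /-- the distinguished zero morphism of each hom-set -/
  zero : ∀ X Y : C, X ⟶ Y
  /-- `0 ∘ f = 0` -/
  comp_zero : ∀ {X Y Z : C} (f : X ⟶ Y), f ≫ zero Y Z = zero X Z
  /-- the map on objects -/
  D : C → C
  p0 : ∀ X : C, D X ⟶ X
  p1 : ∀ X : C, D X ⟶ X
  s : ∀ X : C, D X ⟶ X
  /-- `p0` and `p1` are jointly monic -/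
  jointly_monic : ∀ {Y X : C} {f g : Y ⟶ D X},
    f ≫ p0 X = g ≫ p0 X → f ≫ p1 X = g ≫ p1 X → f = g

namespace SummablePairing

variable {C : Type u} [Category.{v} C]

/-- `f0 ⊞ f1` : summability of two parallel morphisms. -/
def Summable (S : SummablePairing C) {X Y : C} (f0 f1 : X ⟶ Y) : Prop :=
  ∃ w : X ⟶ S.D Y, w ≫ S.p0 Y = f0 ∧ w ≫ S.p1 Y = f1

/-- the witness `⟨f0, f1⟩` of a summable pair (an arbitrary default otherwise) -/
noncomputable def wit (S : SummablePairing C) {X Y : C} (f0 f1 : X ⟶ Y) : X ⟶ S.D Y :=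
  if h : S.Summable f0 f1 then h.choose else S.zero X (S.D Y)

/-- the sum `f0 + f1` of a summable pair -/
noncomputable def add (S : SummablePairing C) {X Y : C} (f0 f1 : X ⟶ Y) : X ⟶ Y :=
  S.wit f0 f1 ≫ S.s Y

/-- additive morphisms -/
def Additive (S : SummablePairing C) {Y Z : C} (h : Y ⟶ Z) : Prop :=
  (∀ X : C, S.zero X Y ≫ h = S.zero X Z) ∧
  (∀ (X : C) (f0 f1 : X ⟶ Y), S.Summable f0 f1 →
    S.Summable (f0 ≫ h) (f1 ≫ h) ∧ S.add f0 f1 ≫ h = S.add (f0 ≫ h) (f1 ≫ h))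

/-- a left pre-summability structure: `p0`, `p1` and `s` are additive -/
def IsLeftPreSummability (S : SummablePairing C) : Prop :=
  (∀ X : C, S.Additive (S.p0 X)) ∧ (∀ X : C, S.Additive (S.p1 X)) ∧
  (∀ X : C, S.Additive (S.s X))

/-- axiom (D-com) -/
def Dcom (S : SummablePairing C) : Prop :=
  ∀ X : C, S.Summable (S.p1 X) (S.p0 X) ∧ S.add (S.p1 X) (S.p0 X) = S.s X

/-- axiom (D-zero) -/
def Dzero (S : SummablePairing C) : Prop :=
  ∀ X : C, S.Summable (𝟙 X) (S.zero X X) ∧ S.Summable (S.zero X X) (𝟙 X) ∧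
    S.add (𝟙 X) (S.zero X X) = 𝟙 X ∧ S.add (S.zero X X) (𝟙 X) = 𝟙 X

/-- axiom (D-witness) -/
def Dwitness (S : SummablePairing C) : Prop :=
  ∀ (Y X : C) (f g : Y ⟶ S.D X),
    S.Summable (f ≫ S.s X) (g ≫ S.s X) → S.Summable f g

/-- a left summability structure -/
def IsLeftSummability (S : SummablePairing C) : Prop :=
  S.IsLeftPreSummability ∧ S.Dcom ∧ S.Dzero ∧ S.Dwitness

/-- `ι₀ = ⟨id, 0⟩` -/
noncomputable def iota0 (S : SummablePairing C) (X : C) : X ⟶ S.D X :=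
  S.wit (𝟙 X) (S.zero X X)

/-- `θ = ⟨π₀ ∘ π₀, π₁ ∘ π₀ + π₀ ∘ π₁⟩` -/
noncomputable def theta (S : SummablePairing C) (X : C) : S.D (S.D X) ⟶ S.D X :=
  S.wit (S.p0 (S.D X) ≫ S.p0 X)
    (S.add (S.p0 (S.D X) ≫ S.p1 X) (S.p1 (S.D X) ≫ S.p0 X))

/-- `l = ⟨⟨π₀, 0⟩, ⟨0, π₁⟩⟩` -/
noncomputable def lmor (S : SummablePairing C) (X : C) : S.D X ⟶ S.D (S.D X) :=
  S.wit (S.wit (S.p0 X) (S.zero (S.D X) X)) (S.wit (S.zero (S.D X) X) (S.p1 X))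

/-- `c = ⟨⟨π₀ ∘ π₀, π₀ ∘ π₁⟩, ⟨π₁ ∘ π₀, π₁ ∘ π₁⟩⟩` -/
noncomputable def cmor (S : SummablePairing C) (X : C) : S.D (S.D X) ⟶ S.D (S.D X) :=
  S.wit (S.wit (S.p0 (S.D X) ≫ S.p0 X) (S.p1 (S.D X) ≫ S.p0 X))
        (S.wit (S.p0 (S.D X) ≫ S.p1 X) (S.p1 (S.D X) ≫ S.p1 X))

end SummablePairing

/-- summability of a finite family of morphisms (represented as a multiset),
together with its sum, defined inductively -/
inductive SummablePairing.MSummable {C : Type u} [Category.{v} C] (S : SummablePairing C) :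
    ∀ {X Y : C}, Multiset (X ⟶ Y) → (X ⟶ Y) → Prop
  | nil {X Y : C} : SummablePairing.MSummable S (0 : Multiset (X ⟶ Y)) (S.zero X Y)
  | cons {X Y : C} {m : Multiset (X ⟶ Y)} {t f : X ⟶ Y} :
      SummablePairing.MSummable S m t → S.Summable t f →
      SummablePairing.MSummable S (f ::ₘ m) (S.add t f)

/-- the data making a left summability structure a pre-differential structure:
an operator `D` on morphisms with `π₀ ∘ D f = f ∘ π₀` -/
structure DiffOp {C : Type u} [Category.{v} C] (S : SummablePairing C) where
  map : ∀ {X Y : C}, (X ⟶ Y) → (S.D X ⟶ S.D Y)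
  map_p0 : ∀ {X Y : C} (f : X ⟶ Y), map f ≫ S.p0 Y = S.p0 X ≫ f

namespace DiffOp

variable {C : Type u} [Category.{v} C] {S : SummablePairing C}

/-- the differential `∂f = π₁ ∘ D f` -/
def dd (Dm : DiffOp S) {X Y : C} (f : X ⟶ Y) : S.D X ⟶ Y := Dm.map f ≫ S.p1 Y

/-- D-linear morphisms -/
def DLinear (Dm : DiffOp S) {X Y : C} (f : X ⟶ Y) : Prop :=
  Dm.map f ≫ S.p1 Y = S.p1 X ≫ f ∧ Dm.map f ≫ S.s Y = S.s X ≫ f ∧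
  (∀ U : C, S.zero U X ≫ f = S.zero U Y)

/-- axiom (Dproj-lin) -/
def DprojLin (Dm : DiffOp S) : Prop :=
  (∀ X : C, Dm.DLinear (S.p0 X)) ∧ (∀ X : C, Dm.DLinear (S.p1 X))

/-- axiom (Dsum-lin) -/
def DsumLin (Dm : DiffOp S) : Prop :=
  (∀ X : C, Dm.DLinear (S.s X)) ∧ (∀ X Y : C, Dm.DLinear (S.zero X Y))

/-- axiom (D-chain): functoriality -/
def Dchain (Dm : DiffOp S) : Prop :=
  (∀ X : C, Dm.map (𝟙 X) = 𝟙 (S.D X)) ∧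
  (∀ (X Y Z : C) (f : X ⟶ Y) (g : Y ⟶ Z), Dm.map (f ≫ g) = Dm.map f ≫ Dm.map g)

/-- axiom (D-add): naturality of `ι₀` and `θ` -/
def Dadd (Dm : DiffOp S) : Prop :=
  (∀ (X Y : C) (f : X ⟶ Y), S.iota0 X ≫ Dm.map f = f ≫ S.iota0 Y) ∧
  (∀ (X Y : C) (f : X ⟶ Y), S.theta X ≫ Dm.map f = Dm.map (Dm.map f) ≫ S.theta Y)

/-- axiom (D-lin): naturality of `l` -/
def Dlin (Dm : DiffOp S) : Prop :=
  ∀ (X Y : C) (f : X ⟶ Y), Dm.map f ≫ S.lmor Y = S.lmor X ≫ Dm.map (Dm.map f)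

/-- axiom (D-Schwarz): naturality of `c` -/
def Dschwarz (Dm : DiffOp S) : Prop :=
  ∀ (X Y : C) (f : X ⟶ Y),
    S.cmor X ≫ Dm.map (Dm.map f) = Dm.map (Dm.map f) ≫ S.cmor Y

end DiffOp

/-- the canonical morphism `c& : D(X₀ & X₁) ⟶ D X₀ & D X₁`,
i.e. `⟪⟨p₀ ∘ π₀, p₀ ∘ π₁⟩, ⟨p₁ ∘ π₀, p₁ ∘ π₁⟩⟫` -/
noncomputable def SummablePairing.cAnd {C : Type u} [Category.{v} C] [HasBinaryProducts C]
    (S : SummablePairing C) (X₀ X₁ : C) : S.D (X₀ ⨯ X₁) ⟶ S.D X₀ ⨯ S.D X₁ :=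
  prod.lift
    (S.wit (S.p0 (X₀ ⨯ X₁) ≫ prod.fst) (S.p1 (X₀ ⨯ X₁) ≫ prod.fst))
    (S.wit (S.p0 (X₀ ⨯ X₁) ≫ prod.snd) (S.p1 (X₀ ⨯ X₁) ≫ prod.snd))

/-- the strength `φ⁰ := c&⁻¹ ∘ (id & ι₀)` -/
noncomputable def phi0 {C : Type u} [Category.{v} C] [HasBinaryProducts C]
    (S : SummablePairing C) (X₀ X₁ : C) [IsIso (S.cAnd X₀ X₁)] :
    S.D X₀ ⨯ X₁ ⟶ S.D (X₀ ⨯ X₁) :=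
  prod.map (𝟙 (S.D X₀)) (S.iota0 X₁) ≫ inv (S.cAnd X₀ X₁)

/-- the strength `φ¹ := c&⁻¹ ∘ (ι₀ & id)` -/
noncomputable def phi1 {C : Type u} [Category.{v} C] [HasBinaryProducts C]
    (S : SummablePairing C) (X₀ X₁ : C) [IsIso (S.cAnd X₀ X₁)] :
    X₀ ⨯ S.D X₁ ⟶ S.D (X₀ ⨯ X₁) :=
  prod.map (S.iota0 X₀) (𝟙 (S.D X₁)) ≫ inv (S.cAnd X₀ X₁)

/-- the partial derivative `D₀ f := D f ∘ φ⁰` -/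
noncomputable def pd0 {C : Type u} [Category.{v} C] [HasBinaryProducts C]
    {S : SummablePairing C} (Dm : DiffOp S) {X₀ X₁ Y : C} [IsIso (S.cAnd X₀ X₁)]
    (f : X₀ ⨯ X₁ ⟶ Y) : S.D X₀ ⨯ X₁ ⟶ S.D Y :=
  phi0 S X₀ X₁ ≫ Dm.map f

/-- the partial derivative `D₁ f := D f ∘ φ¹` -/
noncomputable def pd1 {C : Type u} [Category.{v} C] [HasBinaryProducts C]
    {S : SummablePairing C} (Dm : DiffOp S) {X₀ X₁ Y : C} [IsIso (S.cAnd X₀ X₁)]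
    (f : X₀ ⨯ X₁ ⟶ Y) : X₀ ⨯ S.D X₁ ⟶ S.D Y :=
  phi1 S X₀ X₁ ≫ Dm.map f

section AuxProofs

namespace SummablePairing

variable {C : Type u} [Category.{v} C] {S : SummablePairing C}

theorem wit_p0 {X Y : C} {f0 f1 : X ⟶ Y} (h : S.Summable f0 f1) :
    S.wit f0 f1 ≫ S.p0 Y = f0 := by
  rw [wit, dif_pos h]; exact h.choose_spec.1

theorem wit_p1 {X Y : C} {f0 f1 : X ⟶ Y} (h : S.Summable f0 f1) :
    S.wit f0 f1 ≫ S.p1 Y = f1 := by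
  rw [wit, dif_pos h]; exact h.choose_spec.2

theorem wit_eq {X Y : C} {f0 f1 : X ⟶ Y} {w : X ⟶ S.D Y}
    (h0 : w ≫ S.p0 Y = f0) (h1 : w ≫ S.p1 Y = f1) : S.wit f0 f1 = w := by
  have h : S.Summable f0 f1 := ⟨w, h0, h1⟩
  exact S.jointly_monic (by rw [wit_p0 h, h0]) (by rw [wit_p1 h, h1])

theorem add_eq {X Y : C} {f0 f1 : X ⟶ Y} {w : X ⟶ S.D Y}
    (h0 : w ≫ S.p0 Y = f0) (h1 : w ≫ S.p1 Y = f1) : S.add f0 f1 = w ≫ S.s Y := by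
  rw [add, wit_eq h0 h1]

theorem summable_precomp {W X Y : C} (e : W ⟶ X) {f0 f1 : X ⟶ Y} (h : S.Summable f0 f1) :
    S.Summable (e ≫ f0) (e ≫ f1) :=
  ⟨e ≫ S.wit f0 f1, by rw [Category.assoc, wit_p0 h], by rw [Category.assoc, wit_p1 h]⟩

theorem add_precomp {W X Y : C} (e : W ⟶ X) {f0 f1 : X ⟶ Y} (h : S.Summable f0 f1) :
    S.add (e ≫ f0) (e ≫ f1) = e ≫ S.add f0 f1 := by
  rw [add_eq (w := e ≫ S.wit f0 f1) (by rw [Category.assoc, wit_p0 h])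
    (by rw [Category.assoc, wit_p1 h]), add, Category.assoc]

theorem iota0_p0 (hS : S.IsLeftSummability) (X : C) : S.iota0 X ≫ S.p0 X = 𝟙 X :=
  wit_p0 (hS.2.2.1 X).1

theorem iota0_p1 (hS : S.IsLeftSummability) (X : C) : S.iota0 X ≫ S.p1 X = S.zero X X :=
  wit_p1 (hS.2.2.1 X).1

theorem iota0_s (hS : S.IsLeftSummability) (X : C) : S.iota0 X ≫ S.s X = 𝟙 X :=
  (hS.2.2.1 X).2.2.1

theorem summable_symm (hS : S.IsLeftSummability) {X Y : C} {f0 f1 : X ⟶ Y}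
    (h : S.Summable f0 f1) : S.Summable f1 f0 :=
  ⟨S.wit f0 f1 ≫ S.wit (S.p1 Y) (S.p0 Y),
    by rw [Category.assoc, wit_p0 (hS.2.1 Y).1, wit_p1 h],
    by rw [Category.assoc, wit_p1 (hS.2.1 Y).1, wit_p0 h]⟩

theorem add_symm (hS : S.IsLeftSummability) {X Y : C} {f0 f1 : X ⟶ Y}
    (h : S.Summable f0 f1) : S.add f1 f0 = S.add f0 f1 := by
  rw [add_eq (w := S.wit f0 f1 ≫ S.wit (S.p1 Y) (S.p0 Y))
    (by rw [Category.assoc, wit_p0 (hS.2.1 Y).1, wit_p1 h])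
    (by rw [Category.assoc, wit_p1 (hS.2.1 Y).1, wit_p0 h]), Category.assoc]
  have hsw : S.wit (S.p1 Y) (S.p0 Y) ≫ S.s Y = S.s Y := (hS.2.1 Y).2
  rw [hsw]; rfl

theorem summable_zero_right (hS : S.IsLeftSummability) {X Y : C} (f : X ⟶ Y) :
    S.Summable f (S.zero X Y) :=
  ⟨f ≫ S.iota0 Y, by rw [Category.assoc, iota0_p0 hS, Category.comp_id],
    by rw [Category.assoc, iota0_p1 hS, S.comp_zero]⟩

theorem add_zero_right (hS : S.IsLeftSummability) {X Y : C} (f : X ⟶ Y) :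
    S.add f (S.zero X Y) = f := by
  rw [add_eq (w := f ≫ S.iota0 Y)
    (by rw [Category.assoc, iota0_p0 hS, Category.comp_id])
    (by rw [Category.assoc, iota0_p1 hS, S.comp_zero]), Category.assoc, iota0_s hS,
    Category.comp_id]

theorem summable_zero_left (hS : S.IsLeftSummability) {X Y : C} (f : X ⟶ Y) :
    S.Summable (S.zero X Y) f :=
  summable_symm hS (summable_zero_right hS f)

theorem add_zero_left (hS : S.IsLeftSummability) {X Y : C} (f : X ⟶ Y) :
    S.add (S.zero X Y) f = f := by
  rw [add_symm hS (summable_zero_right hS f), add_zero_right hS]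

/-- the exchange lemma, proved from (D-witness) and additivity of `p0`, `p1`, `s` -/
theorem exchange (hS : S.IsLeftSummability) {X Y : C} {f0 f1 g0 g1 : X ⟶ Y}
    (hf : S.Summable f0 f1) (hg : S.Summable g0 g1)
    (h : S.Summable (S.add f0 f1) (S.add g0 g1)) :
    S.Summable f0 g0 ∧ S.Summable f1 g1 ∧
    S.Summable (S.add f0 g0) (S.add f1 g1) ∧
    S.add (S.add f0 g0) (S.add f1 g1) = S.add (S.add f0 f1) (S.add g0 g1) := by
  set u := S.wit f0 f1 with hu
  set v := S.wit g0 g1 with hv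
  have huv : S.Summable u v := hS.2.2.2 X Y u v h
  have hu0 : u ≫ S.p0 Y = f0 := wit_p0 hf
  have hu1 : u ≫ S.p1 Y = f1 := wit_p1 hf
  have hv0 : v ≫ S.p0 Y = g0 := wit_p0 hg
  have hv1 : v ≫ S.p1 Y = g1 := wit_p1 hg
  have hA0 := (hS.1.1 Y).2 X u v huv
  have hA1 := (hS.1.2.1 Y).2 X u v huv
  have hAs := (hS.1.2.2 Y).2 X u v huv
  rw [hu0, hv0] at hA0
  rw [hu1, hv1] at hA1
  refine ⟨hA0.1, hA1.1, ⟨S.add u v, ?_, ?_⟩, ?_⟩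
  · exact hA0.2
  · exact hA1.2
  · rw [add_eq (w := S.add u v) hA0.2 hA1.2]
    have : S.add u v ≫ S.s Y = S.add (u ≫ S.s Y) (v ≫ S.s Y) := hAs.2
    rw [this]; rfl

/-- the summability underlying the definition of `θ` -/
theorem theta_spec (hS : S.IsLeftSummability) (X : C) :
    S.Summable (S.p0 (S.D X) ≫ S.p1 X) (S.p1 (S.D X) ≫ S.p0 X) ∧
    S.Summable (S.p0 (S.D X) ≫ S.p0 X)
      (S.add (S.p0 (S.D X) ≫ S.p1 X) (S.p1 (S.D X) ≫ S.p0 X)) := by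
  have hcom := hS.2.1 X
  have hP : S.Summable (S.p0 (S.D X)) (S.p1 (S.D X)) :=
    ⟨𝟙 _, Category.id_comp _, Category.id_comp _⟩
  have hf : S.Summable (S.p0 (S.D X) ≫ S.p1 X) (S.p0 (S.D X) ≫ S.p0 X) :=
    summable_precomp _ hcom.1
  have hf_add : S.add (S.p0 (S.D X) ≫ S.p1 X) (S.p0 (S.D X) ≫ S.p0 X)
      = S.p0 (S.D X) ≫ S.s X := by
    rw [add_precomp _ hcom.1, hcom.2]
  have hg1 : S.Summable (S.p1 (S.D X) ≫ S.p1 X) (S.p1 (S.D X) ≫ S.p0 X) :=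
    summable_precomp _ hcom.1
  have hg : S.Summable (S.p1 (S.D X) ≫ S.p0 X) (S.p1 (S.D X) ≫ S.p1 X) :=
    summable_symm hS hg1
  have hg_add : S.add (S.p1 (S.D X) ≫ S.p0 X) (S.p1 (S.D X) ≫ S.p1 X)
      = S.p1 (S.D X) ≫ S.s X := by
    rw [add_symm hS hg1, add_precomp _ hcom.1, hcom.2]
  have hsum : S.Summable (S.p0 (S.D X) ≫ S.s X) (S.p1 (S.D X) ≫ S.s X) :=
    ((hS.1.2.2 X).2 _ _ _ hP).1
  have hex := exchange hS hf hg (by rw [hf_add, hg_add]; exact hsum)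
  refine ⟨hex.1, ?_⟩
  have hT0 : S.Summable (S.add (S.p0 (S.D X) ≫ S.p1 X) (S.p1 (S.D X) ≫ S.p0 X))
      (S.zero _ _) := summable_zero_right hS _
  have hex2 := exchange hS hT0 hex.2.1
    (by rw [add_zero_right hS]; exact hex.2.2.1)
  exact summable_symm hS hex2.1

theorem theta_p0 (hS : S.IsLeftSummability) (X : C) :
    S.theta X ≫ S.p0 X = S.p0 (S.D X) ≫ S.p0 X :=
  wit_p0 (theta_spec hS X).2

theorem theta_p1 (hS : S.IsLeftSummability) (X : C) :
    S.theta X ≫ S.p1 X = S.add (S.p0 (S.D X) ≫ S.p1 X) (S.p1 (S.D X) ≫ S.p0 X) :=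
  wit_p1 (theta_spec hS X).2

theorem iota0_theta (hS : S.IsLeftSummability) (X : C) :
    S.iota0 (S.D X) ≫ S.theta X = 𝟙 (S.D X) := by
  apply S.jointly_monic
  · rw [Category.assoc, theta_p0 hS, ← Category.assoc, iota0_p0 hS,
      Category.id_comp]
  · rw [Category.assoc, theta_p1 hS, ← add_precomp _ (theta_spec hS X).1]
    have e1 : S.iota0 (S.D X) ≫ S.p0 (S.D X) ≫ S.p1 X = S.p1 X := by
      rw [← Category.assoc, iota0_p0 hS, Category.id_comp]
    have e2 : S.iota0 (S.D X) ≫ S.p1 (S.D X) ≫ S.p0 X = S.zero (S.D X) X := by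
      rw [← Category.assoc, iota0_p1 hS, (hS.1.1 X).1]
    rw [e1, e2, add_zero_right hS, Category.id_comp]

end SummablePairing

open SummablePairing

theorem mapiota0_theta {C : Type u} [Category.{v} C] {S : SummablePairing C}
    (hS : S.IsLeftSummability) (Dm : DiffOp S) (hproj : Dm.DprojLin)
    (hchain : Dm.Dchain) (X : C) :
    Dm.map (S.iota0 X) ≫ S.theta X = 𝟙 (S.D X) := by
  apply S.jointly_monic
  · rw [Category.assoc, theta_p0 hS, ← Category.assoc, Dm.map_p0, Category.assoc,
      iota0_p0 hS, Category.comp_id, Category.id_comp]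
  · rw [Category.assoc, theta_p1 hS, ← add_precomp _ (theta_spec hS X).1]
    have e1 : Dm.map (S.iota0 X) ≫ S.p0 (S.D X) ≫ S.p1 X = S.zero (S.D X) X := by
      rw [← Category.assoc, Dm.map_p0, Category.assoc, iota0_p1 hS, S.comp_zero]
    have e2 : Dm.map (S.iota0 X) ≫ S.p1 (S.D X) ≫ S.p0 X = S.p1 X := by
      rw [← (hproj.1 X).1, ← Category.assoc, ← hchain.2, iota0_p0 hS, hchain.1,
        Category.id_comp]
    rw [e1, e2, add_zero_left hS, Category.id_comp]

end AuxProofs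
section CartAux

open SummablePairing

variable {C : Type u} [Category.{v} C] [HasBinaryProducts C]
  {S : SummablePairing C} (Dm : DiffOp S)

theorem cAnd_eq {X₀ X₁ : C} (hf : Dm.DLinear (prod.fst : X₀ ⨯ X₁ ⟶ X₀))
    (hs : Dm.DLinear (prod.snd : X₀ ⨯ X₁ ⟶ X₁)) :
    S.cAnd X₀ X₁ = prod.lift (Dm.map prod.fst) (Dm.map prod.snd) := by
  unfold SummablePairing.cAnd
  rw [wit_eq (Dm.map_p0 _) hf.1, wit_eq (Dm.map_p0 _) hs.1]

theorem inv_cAnd_fst {X₀ X₁ : C} [IsIso (S.cAnd X₀ X₁)]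
    (hf : Dm.DLinear (prod.fst : X₀ ⨯ X₁ ⟶ X₀))
    (hs : Dm.DLinear (prod.snd : X₀ ⨯ X₁ ⟶ X₁)) :
    inv (S.cAnd X₀ X₁) ≫ Dm.map (prod.fst : X₀ ⨯ X₁ ⟶ X₀) = prod.fst := by
  rw [← prod.lift_fst (Dm.map (prod.fst : X₀ ⨯ X₁ ⟶ X₀)) (Dm.map prod.snd),
    ← cAnd_eq Dm hf hs, IsIso.inv_hom_id_assoc]

theorem inv_cAnd_snd {X₀ X₁ : C} [IsIso (S.cAnd X₀ X₁)]
    (hf : Dm.DLinear (prod.fst : X₀ ⨯ X₁ ⟶ X₀))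
    (hs : Dm.DLinear (prod.snd : X₀ ⨯ X₁ ⟶ X₁)) :
    inv (S.cAnd X₀ X₁) ≫ Dm.map (prod.snd : X₀ ⨯ X₁ ⟶ X₁) = prod.snd := by
  rw [← prod.lift_snd (Dm.map (prod.fst : X₀ ⨯ X₁ ⟶ X₀)) (Dm.map prod.snd),
    ← cAnd_eq Dm hf hs, IsIso.inv_hom_id_assoc]

theorem phi0_mapfst {X₀ X₁ : C} [IsIso (S.cAnd X₀ X₁)]
    (hf : Dm.DLinear (prod.fst : X₀ ⨯ X₁ ⟶ X₀))
    (hs : Dm.DLinear (prod.snd : X₀ ⨯ X₁ ⟶ X₁)) :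
    phi0 S X₀ X₁ ≫ Dm.map (prod.fst : X₀ ⨯ X₁ ⟶ X₀) = prod.fst := by
  rw [phi0, Category.assoc, inv_cAnd_fst Dm hf hs, prod.map_fst, Category.comp_id]

theorem phi0_mapsnd {X₀ X₁ : C} [IsIso (S.cAnd X₀ X₁)]
    (hf : Dm.DLinear (prod.fst : X₀ ⨯ X₁ ⟶ X₀))
    (hs : Dm.DLinear (prod.snd : X₀ ⨯ X₁ ⟶ X₁)) :
    phi0 S X₀ X₁ ≫ Dm.map (prod.snd : X₀ ⨯ X₁ ⟶ X₁) = prod.snd ≫ S.iota0 X₁ := by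
  rw [phi0, Category.assoc, inv_cAnd_snd Dm hf hs, prod.map_snd]

theorem phi1_mapfst {X₀ X₁ : C} [IsIso (S.cAnd X₀ X₁)]
    (hf : Dm.DLinear (prod.fst : X₀ ⨯ X₁ ⟶ X₀))
    (hs : Dm.DLinear (prod.snd : X₀ ⨯ X₁ ⟶ X₁)) :
    phi1 S X₀ X₁ ≫ Dm.map (prod.fst : X₀ ⨯ X₁ ⟶ X₀) = prod.fst ≫ S.iota0 X₀ := by
  rw [phi1, Category.assoc, inv_cAnd_fst Dm hf hs, prod.map_fst]

theorem phi1_mapsnd {X₀ X₁ : C} [IsIso (S.cAnd X₀ X₁)]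
    (hf : Dm.DLinear (prod.fst : X₀ ⨯ X₁ ⟶ X₀))
    (hs : Dm.DLinear (prod.snd : X₀ ⨯ X₁ ⟶ X₁)) :
    phi1 S X₀ X₁ ≫ Dm.map (prod.snd : X₀ ⨯ X₁ ⟶ X₁) = prod.snd := by
  rw [phi1, Category.assoc, inv_cAnd_snd Dm hf hs, prod.map_snd, Category.comp_id]

theorem key0 (hS : S.IsLeftSummability) (hproj : Dm.DprojLin) (hchain : Dm.Dchain)
    (hadd : Dm.Dadd)
    (hp0 : ∀ X Y : C, Dm.DLinear (prod.fst : X ⨯ Y ⟶ X))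
    (hp1 : ∀ X Y : C, Dm.DLinear (prod.snd : X ⨯ Y ⟶ Y))
    {X₀ X₁ : C} [IsIso (S.cAnd X₀ X₁)] [IsIso (S.cAnd X₀ (S.D X₁))] :
    phi0 S X₀ (S.D X₁) ≫ Dm.map (phi1 S X₀ X₁) ≫ S.theta (X₀ ⨯ X₁)
      = inv (S.cAnd X₀ X₁) := by
  have hid : (phi0 S X₀ (S.D X₁) ≫ Dm.map (phi1 S X₀ X₁) ≫ S.theta (X₀ ⨯ X₁))
      ≫ S.cAnd X₀ X₁ = 𝟙 _ := by
    rw [cAnd_eq Dm (hp0 X₀ X₁) (hp1 X₀ X₁)]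
    apply Limits.prod.hom_ext
    · simp only [Category.assoc, prod.lift_fst, Category.id_comp]
      rw [hadd.2 _ _ prod.fst]
      slice_lhs 2 3 => rw [← hchain.2, phi1_mapfst Dm (hp0 X₀ X₁) (hp1 X₀ X₁), hchain.2]
      slice_lhs 3 4 => rw [mapiota0_theta hS Dm hproj hchain]
      simp only [Category.comp_id, Category.assoc]
      rw [phi0_mapfst Dm (hp0 X₀ (S.D X₁)) (hp1 X₀ (S.D X₁))]
    · simp only [Category.assoc, prod.lift_snd, Category.id_comp]
      rw [hadd.2 _ _ prod.snd]
      slice_lhs 2 3 => rw [← hchain.2, phi1_mapsnd Dm (hp0 X₀ X₁) (hp1 X₀ X₁)]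
      slice_lhs 1 2 => rw [phi0_mapsnd Dm (hp0 X₀ (S.D X₁)) (hp1 X₀ (S.D X₁))]
      simp only [Category.assoc]
      rw [iota0_theta hS, Category.comp_id]
  exact IsIso.eq_inv_of_inv_hom_id hid

theorem key1 (hS : S.IsLeftSummability) (hproj : Dm.DprojLin) (hchain : Dm.Dchain)
    (hadd : Dm.Dadd)
    (hp0 : ∀ X Y : C, Dm.DLinear (prod.fst : X ⨯ Y ⟶ X))
    (hp1 : ∀ X Y : C, Dm.DLinear (prod.snd : X ⨯ Y ⟶ Y))
    {X₀ X₁ : C} [IsIso (S.cAnd X₀ X₁)] [IsIso (S.cAnd (S.D X₀) X₁)] :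
    phi1 S (S.D X₀) X₁ ≫ Dm.map (phi0 S X₀ X₁) ≫ S.theta (X₀ ⨯ X₁)
      = inv (S.cAnd X₀ X₁) := by
  have hid : (phi1 S (S.D X₀) X₁ ≫ Dm.map (phi0 S X₀ X₁) ≫ S.theta (X₀ ⨯ X₁))
      ≫ S.cAnd X₀ X₁ = 𝟙 _ := by
    rw [cAnd_eq Dm (hp0 X₀ X₁) (hp1 X₀ X₁)]
    apply Limits.prod.hom_ext
    · simp only [Category.assoc, prod.lift_fst, Category.id_comp]
      rw [hadd.2 _ _ prod.fst]
      slice_lhs 2 3 => rw [← hchain.2, phi0_mapfst Dm (hp0 X₀ X₁) (hp1 X₀ X₁)]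
      slice_lhs 1 2 => rw [phi1_mapfst Dm (hp0 (S.D X₀) X₁) (hp1 (S.D X₀) X₁)]
      simp only [Category.assoc]
      rw [iota0_theta hS, Category.comp_id]
    · simp only [Category.assoc, prod.lift_snd, Category.id_comp]
      rw [hadd.2 _ _ prod.snd]
      slice_lhs 2 3 => rw [← hchain.2, phi0_mapsnd Dm (hp0 X₀ X₁) (hp1 X₀ X₁), hchain.2]
      slice_lhs 3 4 => rw [mapiota0_theta hS Dm hproj hchain]
      simp only [Category.comp_id, Category.assoc]
      rw [phi1_mapsnd Dm (hp0 (S.D X₀) X₁) (hp1 (S.D X₀) X₁)]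
  exact IsIso.eq_inv_of_inv_hom_id hid

end CartAux
/-- the Leibniz rule `D f ∘ c&⁻¹ = θ ∘ D₀ D₁ f = θ ∘ D₁ D₀ f` in a
cartesian coherent differential category. -/
theorem stmt19 {C : Type u} [Category.{v} C] [HasBinaryProducts C]
    (S : SummablePairing C) (hS : S.IsLeftSummability) (Dm : DiffOp S)
    (hproj : Dm.DprojLin) (hsum : Dm.DsumLin) (hchain : Dm.Dchain)
    (hadd : Dm.Dadd) (hlin : Dm.Dlin) (hschwarz : Dm.Dschwarz)
    (hp0 : ∀ X Y : C, Dm.DLinear (prod.fst : X ⨯ Y ⟶ X))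
    (hp1 : ∀ X Y : C, Dm.DLinear (prod.snd : X ⨯ Y ⟶ Y))
    [∀ X₀ X₁ : C, IsIso (S.cAnd X₀ X₁)]
    {X₀ X₁ Y : C} (f : X₀ ⨯ X₁ ⟶ Y) :
    inv (S.cAnd X₀ X₁) ≫ Dm.map f = pd0 Dm (pd1 Dm f) ≫ S.theta Y ∧
    inv (S.cAnd X₀ X₁) ≫ Dm.map f = pd1 Dm (pd0 Dm f) ≫ S.theta Y := by

  constructor
  · symm
    rw [pd0, pd1, hchain.2]
    simp only [Category.assoc]
    rw [← hadd.2 _ _ f]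
    slice_lhs 1 3 => rw [key0 Dm hS hproj hchain hadd hp0 hp1]
  · symm
    rw [pd1, pd0, hchain.2]
    simp only [Category.assoc]
    rw [← hadd.2 _ _ f]
    slice_lhs 1 3 => rw [key1 Dm hS hproj hchain hadd hp0 hp1]
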